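/- Let d ≥ 3 be an integer, let G be a simple d-regular graph with adjacency matrix A, let x be a vertex of G, and let k ≥ 1 be an integer such that the ball B_k(x) is acyclic. Then for every integer m with 0 ≤ m ≤ 2k, the number of closed walks of length m in G starting and ending at x equals the m-th moment of the Kesten–McKay measure: (A^m)_{xx} = ∫_ℝ λ^m σ_0(dλ). -/

import Mathlib

open MeasureTheory Filter

noncomputable section

/-- The density of the Kesten–McKay measure of degree `d`. -/
def kmDensity (d : ℕ) (l : ℝ) : ℝ :=
  if l ^ 2 < 4 * ((d : ℝ) - 1) then
    ((d : ℝ) / (2 * Real.pi)) * Real.sqrt (4 * ((d : ℝ) - 1) - l ^ 2) / ((d : ℝ) ^ 2 - l ^ 2)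
  else 0

/-- The cumulative distribution function `σ₀((-∞, t])` of the Kesten–McKay measure. -/
def kmCDF (d : ℕ) (t : ℝ) : ℝ := ∫ l in Set.Iic t, kmDensity d l

/-- The Kesten–McKay measure of degree `d`. -/
def kmMeasure (d : ℕ) : Measure ℝ :=
  MeasureTheory.volume.withDensity fun l => ENNReal.ofReal (kmDensity d l)

/-- The bound `γ_d` on the density of the Kesten–McKay measure. -/
def gammaD (d : ℕ) : ℝ :=
  if d ≤ 6 then (d : ℝ) / (4 * Real.pi * Real.sqrt ((d : ℝ) ^ 2 - 4 * ((d : ℝ) - 1)))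
  else Real.sqrt ((d : ℝ) - 1) / ((d : ℝ) * Real.pi)

/-- The density of the rescaled Kesten–McKay measure of degree `d`. -/
def kmrDensity (d : ℕ) (l : ℝ) : ℝ :=
  if l ^ 2 < 1 then
    (2 / Real.pi) * (((d : ℝ) * ((d : ℝ) - 1)) / ((d : ℝ) ^ 2 - 4 * ((d : ℝ) - 1) * l ^ 2)) *
      Real.sqrt (1 - l ^ 2)
  else 0

/-- The CDF of the rescaled Kesten–McKay measure. -/
def kmrCDF (d : ℕ) (t : ℝ) : ℝ := ∫ l in Set.Iic t, kmrDensity d l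

/-- The density of the semicircle measure. -/
def scDensity (l : ℝ) : ℝ := if l ^ 2 < 1 then (2 / Real.pi) * Real.sqrt (1 - l ^ 2) else 0

/-- The CDF of the semicircle measure. -/
def scCDF (t : ℝ) : ℝ := ∫ l in Set.Iic t, scDensity l

/-- The semicircle measure. -/
def scMeasure : Measure ℝ :=
  MeasureTheory.volume.withDensity fun l => ENNReal.ofReal (scDensity l)

/-- The bound `γ̃_d` on the density of the rescaled Kesten–McKay measure. -/
def gammaTilde (d : ℕ) : ℝ :=
  if d ≤ 6 then
    (d : ℝ) * Real.sqrt ((d : ℝ) - 1) /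
      (2 * Real.pi * Real.sqrt ((d : ℝ) ^ 2 - 4 * ((d : ℝ) - 1)))
  else 2 * ((d : ℝ) - 1) / (Real.pi * (d : ℝ))

/-- The Stieltjes transform `Γ_{𝒯_d}(z) = ∫ (λ - z)⁻¹ σ₀(dλ)` of the Kesten–McKay measure. -/
def kmStieltjes (d : ℕ) (z : ℂ) : ℂ := ∫ l : ℝ, ((l : ℂ) - z)⁻¹ ∂(kmMeasure d)

/-- The Stieltjes transform `Γ_sc(z) = ∫ (λ - z)⁻¹ σ_sc(dλ)` of the semicircle measure. -/
def scStieltjes (z : ℂ) : ℂ := ∫ l : ℝ, ((l : ℂ) - z)⁻¹ ∂scMeasure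

open Classical in
/-- The set `𝒢_{n,d}` of simple `d`-regular graphs on `n` vertices. -/
def regSet (n d : ℕ) : Finset (SimpleGraph (Fin n)) :=
  Finset.univ.filter fun G => G.IsRegularOfDegree d

open Classical in
/-- The uniform probability `𝒫_{n,d}` of an event `P` on `𝒢_{n,d}`. -/
def regProb (n d : ℕ) (P : SimpleGraph (Fin n) → Prop) : ℝ :=
  (((regSet n d).filter P).card : ℝ) / ((regSet n d).card : ℝ)

open Classical in
/-- The uniform expectation `ℰ_{n,d}` of a function `f` on `𝒢_{n,d}`. -/
def regExp (n d : ℕ) (f : SimpleGraph (Fin n) → ℝ) : ℝ :=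
  (∑ G ∈ regSet n d, f G) / ((regSet n d).card : ℝ)

/-- The adjacency matrix of a simple graph is hermitian (as a real matrix). -/
theorem adjMatrix_isHermitian {n : ℕ} (G : SimpleGraph (Fin n)) [DecidableRel G.Adj] :
    (G.adjMatrix ℝ).IsHermitian := by
  unfold Matrix.IsHermitian
  rw [Matrix.conjTranspose_eq_transpose_of_trivial]
  exact G.isSymm_adjMatrix

/-- The local spectral measure of `(-∞, t]` at a vertex `x`:
`μ_{n,x}((-∞,t]) = ∑_{j : λ_j ≤ t} |φ_j(x)|²`. -/
def localCDF {n : ℕ} {A : Matrix (Fin n) (Fin n) ℝ} (hA : A.IsHermitian) (x : Fin n)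
    (t : ℝ) : ℝ :=
  ∑ j, if hA.eigenvalues j ≤ t then (hA.eigenvectorBasis j x) ^ 2 else 0

open Classical in
/-- The number of eigenvalues (with multiplicity) lying in a set `I ⊂ ℝ`. -/
def eigCount {n : ℕ} {A : Matrix (Fin n) (Fin n) ℝ} (hA : A.IsHermitian) (I : Set ℝ) : ℕ :=
  (Finset.univ.filter fun j => hA.eigenvalues j ∈ I).card

/-- The Green function `Γ(x,z) = ∑_j |φ_j(x)|²/(λ_j - z)`. -/
def greenFn {n : ℕ} {A : Matrix (Fin n) (Fin n) ℝ} (hA : A.IsHermitian) (x : Fin n)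
    (z : ℂ) : ℂ :=
  ∑ j, (((hA.eigenvectorBasis j x : ℝ) ^ 2 : ℂ)) / (((hA.eigenvalues j : ℝ) : ℂ) - z)

open Classical in
/-- `μ_{n,x}((-∞,t])` for the adjacency matrix of `G`. -/
def adjCDF {n : ℕ} (G : SimpleGraph (Fin n)) (x : Fin n) (t : ℝ) : ℝ :=
  localCDF (adjMatrix_isHermitian G) x t

open Classical in
/-- `𝒩_I(G_n)` for the adjacency matrix of `G`. -/
def adjEigCount {n : ℕ} (G : SimpleGraph (Fin n)) (I : Set ℝ) : ℕ :=
  eigCount (adjMatrix_isHermitian G) I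

open Classical in
/-- `Γ_n(x,z)` for the adjacency matrix of `G`. -/
def adjGreen {n : ℕ} (G : SimpleGraph (Fin n)) (x : Fin n) (z : ℂ) : ℂ :=
  greenFn (adjMatrix_isHermitian G) x z

open Classical in
/-- The rescaled adjacency matrix `Ã_n = A_n / (2√(d-1))`. -/
def radjMatrix {n : ℕ} (d : ℕ) (G : SimpleGraph (Fin n)) : Matrix (Fin n) (Fin n) ℝ :=
  (2 * Real.sqrt ((d : ℝ) - 1))⁻¹ • G.adjMatrix ℝ

open Classical in
theorem radjMatrix_isHermitian {n : ℕ} (d : ℕ) (G : SimpleGraph (Fin n)) :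
    (radjMatrix d G).IsHermitian := by
  have h := adjMatrix_isHermitian G
  unfold radjMatrix
  show _ = _
  rw [Matrix.conjTranspose_smul, h]
  simp

open Classical in
/-- `μ̃_{n,x}((-∞,t])` for the rescaled adjacency matrix of `G`. -/
def radjCDF {n : ℕ} (d : ℕ) (G : SimpleGraph (Fin n)) (x : Fin n) (t : ℝ) : ℝ :=
  localCDF (radjMatrix_isHermitian d G) x t

open Classical in
/-- `𝒩̃_I(G_n)` for the rescaled adjacency matrix of `G`. -/
def radjEigCount {n : ℕ} (d : ℕ) (G : SimpleGraph (Fin n)) (I : Set ℝ) : ℕ :=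
  eigCount (radjMatrix_isHermitian d G) I

open Classical in
/-- `Γ̃_n(x,z)` for the rescaled adjacency matrix of `G`. -/
def radjGreen {n : ℕ} (d : ℕ) (G : SimpleGraph (Fin n)) (x : Fin n) (z : ℂ) : ℂ :=
  greenFn (radjMatrix_isHermitian d G) x z

/-- The ball `B_k(x)` of a graph `G` around a vertex `x`, viewed as a (spanning) subgraph:
its edges are the edges of `G` incident to at least one vertex at distance `< k` from `x`. -/
def ballGraph {n : ℕ} (G : SimpleGraph (Fin n)) (x : Fin n) (k : ℕ) : SimpleGraph (Fin n) where
  Adj u v := G.Adj u v ∧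
    ((G.Reachable x u ∧ G.dist x u < k) ∨ (G.Reachable x v ∧ G.dist x v < k))
  symm := by
    constructor
    intro u v h
    exact ⟨h.1.symm, h.2.symm⟩
  loopless := by
    constructor
    intro u h
    exact G.irrefl h.1

/-- `R(x)`, the largest `k` such that `B_k(x)` is acyclic. -/
def Rmax {n : ℕ} (G : SimpleGraph (Fin n)) (x : Fin n) : ℕ :=
  sSup {k | (ballGraph G x k).IsAcyclic}

/-- `R(x)* = R(x)` if `R(x)` is odd, and `R(x) - 1` if `R(x)` is even. -/
def Rstar {n : ℕ} (G : SimpleGraph (Fin n)) (x : Fin n) : ℕ :=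
  if Odd (Rmax G x) then Rmax G x else Rmax G x - 1

open Classical in
/-- The number of cycles of length `k` in `G`, counted as subgraphs (i.e. two cycles are
identified when they traverse the same set of edges). -/
def numCycles {n : ℕ} (G : SimpleGraph (Fin n)) (k : ℕ) : ℕ :=
  Set.ncard {s : Finset (Sym2 (Fin n)) |
    ∃ (x : Fin n) (w : G.Walk x x), w.IsCycle ∧ w.length = k ∧ w.edges.toFinset = s}

open Classical in
/-- `|F_n(k)|`, the number of vertices `x` of `G` whose ball `B_k(x)` is acyclic. -/
def acyclicBallCount {n : ℕ} (G : SimpleGraph (Fin n)) (k : ℕ) : ℕ :=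
  (Finset.univ.filter fun x : Fin n => (ballGraph G x k).IsAcyclic).card

open Classical in
/-- `G` is `d`-regular (with classical decidability). -/
def isReg {n : ℕ} (G : SimpleGraph (Fin n)) (d : ℕ) : Prop :=
  G.IsRegularOfDegree d

/-!
Both sides equal `jacobiCoeff b m 0` for the Jacobi sequence `b = treeJacobi d = (0, d, d - 1, …)`
of the `d`-regular tree; `jacobiCoeff b m j` is the coefficient of `v j` in `T ^ m (v 0)` whenever
`T (v j) = v (j + 1) + b j • v (j - 1)`.

Graph side: let `χ j` be the indicator of the sphere of radius `j` around `x`. Every edge of the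
acyclic ball is a bridge, whereas the edges from each vertex to a neighbour one step closer to `x`
connect all levels below it to `x`. Hence, for `j < k`, no two vertices at distance `j` are
adjacent and a vertex at distance `j + 1` has exactly one neighbour at distance `j`; by regularity
`A χ j = χ (j + 1) + b j • χ (j - 1)`. So `A ^ a χ 0 = ∑ j, jacobiCoeff b a j • χ j` for `a ≤ k`,
and the spheres have the sizes `jacobiWeight b j` of the tree. Splitting `m = a + a'` with
`a, a' ≤ k`, `(A ^ m) x x = ⟪A ^ a χ 0, A ^ a' χ 0⟫`, and the self-adjointness of the Jacobi
operator for these weights turns this into `jacobiCoeff b m 0`.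

Measure side: `X ^ m = ∑ j, jacobiCoeff b m j • q j` for the monic orthogonal polynomials
`q j = jacobiPoly b j`, so it suffices that `I j = ∫ q j dσ₀` is `1` for `j = 0` and `0` otherwise.
The density times `d² - λ²` is a semicircle, against which the `q j` are differences of rescaled
Chebyshev polynomials; this evaluates `∫ (d² - λ²) q j dσ₀` and gives a linear recurrence for `I`.
Its other solutions grow like `(d - 1) ^ j`, which `|I j| = O(j (d - 1) ^ (j / 2))` rules out.
-/

namespace KestenMcKay

open Finset Polynomial Polynomial.Chebyshev Real Topology SimpleGraph
open scoped Matrix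

section Jacobi

variable {R : Type*} [CommRing R] (b : ℕ → R)

def jacobiCoeff : ℕ → ℕ → R
  | 0, j => if j = 0 then 1 else 0
  | m + 1, 0 => b 1 * jacobiCoeff m 1
  | m + 1, j + 1 => jacobiCoeff m j + b (j + 2) * jacobiCoeff m (j + 2)

theorem jacobiCoeff_eq_zero_of_lt : ∀ {m j : ℕ}, m < j → jacobiCoeff b m j = 0
  | 0, _, h => if_neg h.ne'
  | m + 1, j + 1, h => by
    rw [jacobiCoeff, jacobiCoeff_eq_zero_of_lt (by omega : m < j),
      jacobiCoeff_eq_zero_of_lt (by omega : m < j + 2), mul_zero, add_zero]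

variable {b} {M : Type*} [AddCommGroup M] [Module R M]

theorem sum_jacobiCoeff_smul_shift (hb : b 0 = 0) (v : ℕ → M) (m : ℕ) :
    ∑ j ∈ range (m + 1), jacobiCoeff b m j • (v (j + 1) + b j • v (j - 1)) =
      ∑ j ∈ range (m + 2), jacobiCoeff b (m + 1) j • v j := by
  have hdown : ∑ j ∈ range (m + 1), jacobiCoeff b m j • b j • v (j - 1) =
      ∑ j ∈ range (m + 2), (b (j + 1) * jacobiCoeff b m (j + 1)) • v j := by
    rw [sum_range_succ' _ m, sum_range_succ, sum_range_succ,
      jacobiCoeff_eq_zero_of_lt b (by omega : m < m + 1),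
      jacobiCoeff_eq_zero_of_lt b (by omega : m < m + 1 + 1)]
    simp [hb, smul_smul, mul_comm]
  rw [sum_range_succ' _ (m + 1)]
  simp only [smul_add, sum_add_distrib, hdown, jacobiCoeff, add_smul]
  rw [sum_range_succ' _ (m + 1)]
  abel

theorem pow_apply_eq_sum_jacobiCoeff (hb : b 0 = 0) (T : Module.End R M) (v : ℕ → M) {N : ℕ}
    (hT : ∀ j < N, T (v j) = v (j + 1) + b j • v (j - 1)) :
    ∀ m ≤ N, (T ^ m) (v 0) = ∑ j ∈ range (m + 1), jacobiCoeff b m j • v j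
  | 0, _ => by simp [jacobiCoeff]
  | m + 1, hm => by
    rw [pow_succ', Module.End.mul_apply, pow_apply_eq_sum_jacobiCoeff hb T v hT m (by omega),
      map_sum, ← sum_jacobiCoeff_smul_shift hb]
    refine sum_congr rfl fun j hj => ?_
    rw [map_smul, hT j (by have := mem_range.1 hj; omega)]

theorem sum_range_jacobiCoeff_smul_of_lt {m N : ℕ} (h : m < N) (v : ℕ → M) :
    ∑ j ∈ range N, jacobiCoeff b m j • v j = ∑ j ∈ range (m + 1), jacobiCoeff b m j • v j :=
  (sum_subset (range_subset_range.2 h) fun j _ hj => by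
    rw [jacobiCoeff_eq_zero_of_lt b (by simpa using hj), zero_smul]).symm

variable (b) in
def jacobiWeight : ℕ → R
  | 0 => 1
  | j + 1 => b (j + 1) * jacobiWeight j

/-- The right-hand side is symmetric in `p` and `e`: the Jacobi operator is self-adjoint for the
weights `jacobiWeight b`. -/
theorem sum_jacobiCoeff_succ_mul_jacobiWeight {p e N : ℕ} (hp : p ≤ N) :
    ∑ j ∈ range (N + 1), jacobiCoeff b (p + 1) j * jacobiCoeff b e j * jacobiWeight b j =
      ∑ i ∈ range N, jacobiWeight b (i + 1) *
        (jacobiCoeff b p i * jacobiCoeff b e (i + 1) +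
          jacobiCoeff b p (i + 1) * jacobiCoeff b e i) := by
  have hlast : jacobiWeight b (N + 1) * (jacobiCoeff b p (N + 1) * jacobiCoeff b e N) = 0 := by
    rw [jacobiCoeff_eq_zero_of_lt b (by omega : p < N + 1), zero_mul, mul_zero]
  have hdown :
      ∑ i ∈ range N, jacobiWeight b (i + 1) * (jacobiCoeff b p (i + 1) * jacobiCoeff b e i) =
      ∑ i ∈ range N,
          b (i + 2) * jacobiCoeff b p (i + 2) * jacobiCoeff b e (i + 1) * jacobiWeight b (i + 1) +
        b 1 * jacobiCoeff b p 1 * jacobiCoeff b e 0 * jacobiWeight b 0 := by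
    rw [← add_zero (∑ i ∈ range N, _), ← hlast, ← sum_range_succ, sum_range_succ']
    simp only [jacobiWeight]
    congr 1
    · exact sum_congr rfl fun i _ => by ring
    · ring
  have hup : ∑ i ∈ range N, jacobiWeight b (i + 1) * (jacobiCoeff b p i * jacobiCoeff b e (i + 1)) =
      ∑ i ∈ range N, jacobiCoeff b p i * jacobiCoeff b e (i + 1) * jacobiWeight b (i + 1) :=
    sum_congr rfl fun _ _ => by ring
  rw [sum_range_succ']
  simp only [jacobiCoeff, mul_add, sum_add_distrib, hup, hdown, add_mul]
  ring

theorem sum_jacobiCoeff_mul_jacobiCoeff_mul_jacobiWeight :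
    ∀ a c, ∑ j ∈ range (a + c + 1), jacobiCoeff b a j * jacobiCoeff b c j * jacobiWeight b j =
      jacobiCoeff b (a + c) 0
  | 0, c => by simp [jacobiCoeff, jacobiWeight]
  | a + 1, c => by
    have h := sum_jacobiCoeff_mul_jacobiCoeff_mul_jacobiWeight a (c + 1)
    rw [show a + (c + 1) = a + c + 1 by omega] at h
    rw [show a + 1 + c = a + c + 1 by omega, sum_jacobiCoeff_succ_mul_jacobiWeight (by omega), ← h]
    simp_rw [mul_comm (jacobiCoeff b a _) (jacobiCoeff b (c + 1) _)]
    rw [sum_jacobiCoeff_succ_mul_jacobiWeight (by omega)]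
    exact sum_congr rfl fun _ _ => by ring

variable (b) in
def jacobiPoly : ℕ → R[X]
  | 0 => 1
  | 1 => X
  | j + 2 => X * jacobiPoly (j + 1) - C (b (j + 1)) * jacobiPoly j

theorem X_mul_jacobiPoly (hb : b 0 = 0) :
    ∀ j, X * jacobiPoly b j = jacobiPoly b (j + 1) + b j • jacobiPoly b (j - 1)
  | 0 => by simp [jacobiPoly, hb]
  | j + 1 => by simp [jacobiPoly, smul_eq_C_mul]

theorem X_pow_eq_sum_jacobiPoly (hb : b 0 = 0) (m : ℕ) :
    (X : R[X]) ^ m = ∑ j ∈ range (m + 1), jacobiCoeff b m j • jacobiPoly b j := by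
  have := pow_apply_eq_sum_jacobiCoeff hb (LinearMap.mulLeft R X) (jacobiPoly b)
    (fun j _ => X_mul_jacobiPoly hb j) m le_rfl
  simpa [LinearMap.pow_mulLeft, jacobiPoly] using this

theorem X_sq_mul_jacobiPoly (hb : b 0 = 0) (j : ℕ) :
    X ^ 2 * jacobiPoly b j = jacobiPoly b (j + 2) + (b (j + 1) + b j) • jacobiPoly b j +
      (b j * b (j - 1)) • jacobiPoly b (j - 2) := by
  rcases j with _ | j
  · simp [jacobiPoly, hb, smul_eq_C_mul]; ring
  · rw [sq, mul_assoc, X_mul_jacobiPoly hb, mul_add, mul_smul_comm, X_mul_jacobiPoly hb,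
      X_mul_jacobiPoly hb]
    simp only [Nat.add_sub_cancel, show j + 1 - 2 = j - 1 by omega]
    module

/-- For `j ≥ 1`, a vertex at distance `j - 1` from the root of the `d`-regular tree has
`treeJacobi d j` neighbours at distance `j`. -/
def treeJacobi (d : R) : ℕ → R
  | 0 => 0
  | 1 => d
  | _ + 2 => d - 1

end Jacobi

section Chebyshev

theorem abs_eval_S_real_le {t : ℝ} (ht : |t| ≤ 2) : ∀ n : ℕ, |(S ℝ n).eval t| ≤ n + 1
  | 0 => by simp
  | n + 1 => by
    have hC : |(C ℝ (n + 1 : ℕ)).eval t| ≤ 2 := by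
      obtain ⟨h1, h2⟩ := abs_le.mp ht
      have ht' : t = 2 * cos (arccos (t / 2)) := by
        rw [cos_arccos (by linarith) (by linarith)]; ring
      rw [ht', C_two_mul_real_cos, abs_mul, abs_two]
      linarith [abs_cos_le_one ((((n + 1 : ℕ) : ℤ) : ℝ) * arccos (t / 2))]
    have hrec := congrArg (eval t) (S_eq_X_mul_S_add_C ℝ n)
    push_cast at hrec hC ⊢
    simp only [eval_mul, eval_ofNat, eval_add, eval_X] at hrec
    have htS : |t * (S ℝ n).eval t| ≤ 2 * (n + 1) := by
      rw [abs_mul]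
      exact mul_le_mul ht (abs_eval_S_real_le ht n) (abs_nonneg _) zero_le_two
    have := abs_add_le (t * (S ℝ n).eval t) ((C ℝ (n + 1)).eval t)
    rw [← hrec, abs_mul, abs_two] at this
    linarith

theorem integral_cos_nat_mul (n : ℕ) :
    ∫ θ in (0 : ℝ)..π, cos (n * θ) = if n = 0 then π else 0 := by
  split_ifs with hn
  · simp [hn]
  · rw [intervalIntegral.integral_comp_mul_left cos (Nat.cast_ne_zero.mpr hn)]
    simp [sin_nat_mul_pi]

theorem integral_sin_succ_mul_mul_sin (j : ℕ) :
    ∫ θ in (0 : ℝ)..π, sin ((j + 1) * θ) * sin θ = if j = 0 then π / 2 else 0 := by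
  have hprod : ∀ θ, sin ((j + 1) * θ) * sin θ =
      (cos (j * θ) - cos (((j + 2 : ℕ) : ℝ) * θ)) / 2 := by
    intro θ
    rw [cos_sub_cos]
    push_cast
    rw [show (j * θ + (j + 2) * θ) / 2 = (j + 1) * θ by ring,
      show (j * θ - (j + 2) * θ) / 2 = -θ by ring, sin_neg]
    ring
  have hcont : ∀ n : ℕ, IntervalIntegrable (fun θ => cos (n * θ)) MeasureTheory.volume 0 π :=
    fun n => (continuous_cos.comp (continuous_const.mul continuous_id)).intervalIntegrable _ _
  simp_rw [hprod]
  rw [intervalIntegral.integral_div, intervalIntegral.integral_sub (hcont j) (hcont (j + 2)),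
    integral_cos_nat_mul, integral_cos_nat_mul, if_neg (show j + 2 ≠ 0 by omega)]
  split_ifs <;> ring

def scaledS (s : ℝ) (j : ℕ) (l : ℝ) : ℝ := s ^ j * (S ℝ j).eval (l / s)

variable {s : ℝ}

theorem scaledS_zero (l : ℝ) : scaledS s 0 l = 1 := by simp [scaledS]

theorem scaledS_one (hs : s ≠ 0) (l : ℝ) : scaledS s 1 l = l := by
  simp only [scaledS, pow_one, Nat.cast_one, S_one, eval_X]
  field_simp

theorem scaledS_add_two (hs : s ≠ 0) (j : ℕ) (l : ℝ) :
    scaledS s (j + 2) l = l * scaledS s (j + 1) l - s ^ 2 * scaledS s j l := by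
  simp only [scaledS]
  push_cast
  rw [S_add_two]
  simp only [eval_sub, eval_mul, eval_X]
  field_simp
  ring

theorem continuous_scaledS (s : ℝ) (j : ℕ) : Continuous (scaledS s j) := by
  unfold scaledS; fun_prop

theorem abs_scaledS_le (hs : 0 < s) {l : ℝ} (hl : |l| ≤ 2 * s) (j : ℕ) :
    |scaledS s j l| ≤ (j + 1) * s ^ j := by
  have ht : |l / s| ≤ 2 := by rw [abs_div, abs_of_pos hs, div_le_iff₀ hs]; exact hl
  rw [scaledS, abs_mul, abs_pow, abs_of_pos hs, mul_comm]
  exact mul_le_mul_of_nonneg_right (abs_eval_S_real_le ht j) (by positivity)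

/-- Substituting `l = 2 s cos θ` reduces this to `∫₀^π sin ((j + 1) θ) sin θ dθ`. -/
theorem integral_scaledS_mul_sqrt (hs : 0 < s) (j : ℕ) :
    ∫ l in -(2 * s)..2 * s, scaledS s j l * √(4 * s ^ 2 - l ^ 2) =
      if j = 0 then 2 * π * s ^ 2 else 0 := by
  have hsub := intervalIntegral.integral_comp_mul_deriv (a := 0) (b := π)
    (f := fun θ => 2 * s * cos θ) (f' := fun θ => -(2 * s * sin θ))
    (g := fun l => scaledS s j l * √(4 * s ^ 2 - l ^ 2))
    (fun θ _ => by simpa using (hasDerivAt_cos θ).const_mul (2 * s)) (by fun_prop)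
    (by have := continuous_scaledS s j; fun_prop)
  have hpt : Set.EqOn (fun θ => ((fun l => scaledS s j l * √(4 * s ^ 2 - l ^ 2)) ∘
      fun θ => 2 * s * cos θ) θ * -(2 * s * sin θ))
      (fun θ => -(4 * s ^ (j + 2)) * (sin ((j + 1) * θ) * sin θ)) (Set.uIcc 0 π) := by
    intro θ hθ
    rw [Set.uIcc_of_le pi_pos.le] at hθ
    have hsin : 0 ≤ sin θ := sin_nonneg_of_nonneg_of_le_pi hθ.1 hθ.2
    have hsqrt : √(4 * s ^ 2 - (2 * s * cos θ) ^ 2) = 2 * s * sin θ := by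
      rw [show 4 * s ^ 2 - (2 * s * cos θ) ^ 2 = (2 * s * sin θ) ^ 2 by
        linear_combination (-(4 * s ^ 2)) * sin_sq_add_cos_sq θ]
      exact sqrt_sq (by positivity)
    have hS := S_two_mul_real_cos θ j
    push_cast at hS
    have hdiv : 2 * s * cos θ / s = 2 * cos θ := by field_simp
    simp only [Function.comp_apply, hsqrt, scaledS, hdiv]
    linear_combination (-(4 * s ^ (j + 2)) * sin θ) * hS
  rw [intervalIntegral.integral_congr hpt, intervalIntegral.integral_const_mul,
    integral_sin_succ_mul_mul_sin, intervalIntegral.integral_symm] at hsub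
  simp only [cos_zero, cos_pi, mul_one, mul_neg] at hsub
  split_ifs at hsub ⊢ with hj
  · subst hj; linear_combination hsub
  · linear_combination hsub

end Chebyshev

section TreePolynomials

variable {D s : ℝ}

theorem eval_jacobiPoly_treeJacobi (hs : s ≠ 0) (hsD : s ^ 2 = D - 1) :
    ∀ j l, (jacobiPoly (treeJacobi D) (j + 2)).eval l = scaledS s (j + 2) l - scaledS s j l
  | 0, l => by
    simp only [jacobiPoly, treeJacobi, eval_sub, eval_mul, eval_X, eval_C, eval_one,
      scaledS_add_two hs, scaledS_one hs, scaledS_zero]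
    linear_combination hsD
  | 1, l => by
    simp only [jacobiPoly, treeJacobi, eval_sub, eval_mul, eval_X, eval_C, eval_one,
      scaledS_add_two hs, scaledS_one hs, scaledS_zero]
    linear_combination (2 * l) * hsD
  | j + 2, l => by
    rw [jacobiPoly, eval_sub, eval_mul, eval_X, eval_mul, eval_C,
      eval_jacobiPoly_treeJacobi hs hsD (j + 1), eval_jacobiPoly_treeJacobi hs hsD j,
      scaledS_add_two hs (j + 2), scaledS_add_two hs j]
    simp only [treeJacobi]
    rw [← hsD]
    ring

theorem abs_eval_jacobiPoly_treeJacobi_le (hs : 1 ≤ s) (hsD : s ^ 2 = D - 1) {l : ℝ}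
    (hl : |l| ≤ 2 * s) : ∀ j, |(jacobiPoly (treeJacobi D) j).eval l| ≤ 2 * (j + 1) * s ^ j
  | 0 => by simp [jacobiPoly]
  | 1 => by simp [jacobiPoly]; linarith
  | j + 2 => by
    rw [eval_jacobiPoly_treeJacobi (by positivity) hsD]
    have h1 := abs_scaledS_le (by positivity) hl (j + 2)
    have h2 := abs_scaledS_le (by positivity) hl j
    have h3 : s ^ j ≤ s ^ (j + 2) := pow_le_pow_right₀ hs (by omega)
    have h4 := abs_sub (scaledS s (j + 2) l) (scaledS s j l)
    push_cast at h1 ⊢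
    nlinarith [pow_nonneg (zero_le_one.trans hs) j]

theorem integral_eval_jacobiPoly_treeJacobi_mul_sqrt (hs : 0 < s) (hsD : s ^ 2 = D - 1)
    (j : ℕ) :
    ∫ l in -(2 * s)..2 * s, (jacobiPoly (treeJacobi D) j).eval l * √(4 * s ^ 2 - l ^ 2) =
      if j = 0 then 2 * π * s ^ 2 else if j = 2 then -(2 * π * s ^ 2) else 0 := by
  match j with
  | 0 => simpa [jacobiPoly, scaledS_zero] using integral_scaledS_mul_sqrt hs 0
  | 1 => simpa [jacobiPoly, scaledS_one hs.ne'] using integral_scaledS_mul_sqrt hs 1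
  | j + 2 =>
    have hint : ∀ i, IntervalIntegrable (fun l => scaledS s i l * √(4 * s ^ 2 - l ^ 2))
        MeasureTheory.volume (-(2 * s)) (2 * s) := fun i =>
      (by have := continuous_scaledS s i; fun_prop : Continuous _).intervalIntegrable _ _
    simp_rw [eval_jacobiPoly_treeJacobi hs.ne' hsD, sub_mul]
    rw [intervalIntegral.integral_sub (hint _) (hint _), integral_scaledS_mul_sqrt hs,
      integral_scaledS_mul_sqrt hs]
    rcases j with _ | j <;> simp

theorem integral_sub_sq_mul_eval_jacobiPoly {μ : MeasureTheory.Measure ℝ}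
    (hμ : ∀ p : ℝ[X], MeasureTheory.Integrable (fun l => p.eval l) μ) {b : ℕ → ℝ}
    (hb : b 0 = 0) (c : ℝ) (j : ℕ) :
    ∫ l, (c - l ^ 2) * (jacobiPoly b j).eval l ∂μ =
      (c - b (j + 1) - b j) * ∫ l, (jacobiPoly b j).eval l ∂μ -
        ∫ l, (jacobiPoly b (j + 2)).eval l ∂μ -
          b j * b (j - 1) * ∫ l, (jacobiPoly b (j - 2)).eval l ∂μ := by
  have hpt : ∀ l, (c - l ^ 2) * (jacobiPoly b j).eval l =
      (c - b (j + 1) - b j) * (jacobiPoly b j).eval l - (jacobiPoly b (j + 2)).eval l -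
        b j * b (j - 1) * (jacobiPoly b (j - 2)).eval l := fun l => by
    have := congrArg (eval l) (X_sq_mul_jacobiPoly hb j)
    simp only [eval_mul, eval_pow, eval_X, eval_add, eval_smul, smul_eq_mul] at this
    linear_combination -this
  have hmul : ∀ (a : ℝ) (p : ℝ[X]), MeasureTheory.Integrable (fun l => a * p.eval l) μ :=
    fun a p => (hμ p).const_mul a
  have hsub : ∀ (a : ℝ) (p r : ℝ[X]),
      MeasureTheory.Integrable (fun l => a * p.eval l - r.eval l) μ :=
    fun a p r => (hmul a p).sub (hμ r)
  simp_rw [hpt]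
  rw [MeasureTheory.integral_sub (hsub _ _ _) (hmul _ _),
    MeasureTheory.integral_sub (hmul _ _) (hμ _), MeasureTheory.integral_const_mul,
    MeasureTheory.integral_const_mul]

theorem eq_zero_of_abs_mul_pow_le {r c K : ℝ} (hr : 1 < r)
    (h : ∀ i : ℕ, |c| * r ^ i ≤ K * (i + 1)) : c = 0 := by
  have hr0 : 0 < r := zero_lt_one.trans hr
  have hlim : Tendsto (fun i : ℕ => K * r * (((i + 1 : ℕ) : ℝ) ^ 1 / r ^ (i + 1))) atTop (𝓝 0) := by
    simpa using ((tendsto_pow_const_div_const_pow_of_one_lt 1 hr).comp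
      (tendsto_add_atTop_nat 1)).const_mul (K * r)
  refine abs_nonpos_iff.mp (ge_of_tendsto' hlim fun i => ?_)
  rw [pow_one, pow_succ, show K * r * (((i + 1 : ℕ) : ℝ) / (r ^ i * r)) = K * (i + 1) / r ^ i by
    push_cast; field_simp, le_div_iff₀ (by positivity)]
  exact h i

theorem eq_zero_of_abs_le_of_eq_pow_mul {s K : ℝ} {I : ℕ → ℝ} (hs : 1 < s)
    (hK : ∀ j, |I j| ≤ K * (j + 1) * s ^ j) {j : ℕ}
    (hgeom : ∀ i, I (j + 2 * i) = (s ^ 4) ^ i * I j) : I j = 0 := by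
  have hK0 : 0 ≤ K := by simpa using (abs_nonneg _).trans (hK 0)
  refine eq_zero_of_abs_mul_pow_le (r := s ^ 2) (K := 2 * K * s ^ j * (j + 1)) (by nlinarith)
    fun i => le_of_mul_le_mul_right ?_ (by positivity : 0 < s ^ (2 * i))
  have h := hK (j + 2 * i)
  rw [hgeom, abs_mul, abs_of_nonneg (by positivity)] at h
  have hi : ((j + 2 * i : ℕ) + 1 : ℝ) ≤ 2 * (j + 1) * (i + 1) := by push_cast; nlinarith
  calc |I j| * (s ^ 2) ^ i * s ^ (2 * i) = (s ^ 4) ^ i * |I j| := by ring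
    _ ≤ K * ((j + 2 * i : ℕ) + 1) * s ^ (j + 2 * i) := h
    _ ≤ K * (2 * (j + 1) * (i + 1)) * s ^ (j + 2 * i) := by gcongr
    _ = 2 * K * s ^ j * (j + 1) * (i + 1) * s ^ (2 * i) := by ring

/-- `hrec` is the relation obtained by integrating `(D² - X²) * jacobiPoly (treeJacobi D) j`.
Its solutions other than `[j = 0]` satisfy `I (j + 2) = (D - 1) ^ 2 * I j` for `j ≥ 1`, which the
bound `hK` forbids. -/
theorem eq_ite_of_treeJacobi_recurrence {K : ℝ} {I : ℕ → ℝ} (hs : 1 < s) (hsD : s ^ 2 = D - 1)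
    (hrec : ∀ j, (D ^ 2 - treeJacobi D (j + 1) - treeJacobi D j) * I j - I (j + 2) -
      treeJacobi D j * treeJacobi D (j - 1) * I (j - 2) =
        if j = 0 then D * (D - 1) else if j = 2 then -(D * (D - 1)) else 0)
    (hK : ∀ j, |I j| ≤ K * (j + 1) * s ^ j) (j : ℕ) : I j = if j = 0 then 1 else 0 := by
  have h2 : I 2 = D * (D - 1) * (I 0 - 1) := by
    have := hrec 0
    simp only [treeJacobi, if_true] at this
    linear_combination -this
  have hs4 : s ^ 4 = (D - 1) ^ 2 := by rw [← hsD]; ring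
  have hstep : ∀ j, I (j + 3) = s ^ 4 * I (j + 1) := by
    intro j
    induction j using Nat.strong_induction_on with
    | _ j ih =>
      rw [hs4]
      match j with
      | 0 =>
        have := hrec 1
        norm_num [treeJacobi] at this
        linear_combination -this
      | 1 =>
        have := hrec 2
        norm_num [treeJacobi] at this
        linear_combination -this + h2
      | j + 2 =>
        have := hrec (j + 3)
        simp only [treeJacobi, show j + 3 - 1 = j + 2 by omega, show j + 3 - 2 = j + 1 by omega,
          if_neg (show j + 3 ≠ 0 by omega), if_neg (show j + 3 ≠ 2 by omega)] at this
        linear_combination -this + ih j (by omega) + I (j + 1) * hs4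
  have hvanish : ∀ j, I (j + 1) = 0 := fun j => eq_zero_of_abs_le_of_eq_pow_mul hs hK fun i => by
    induction i with
    | zero => simp
    | succ i ih =>
      rw [show j + 1 + 2 * (i + 1) = j + 2 * i + 3 by ring, hstep,
        show j + 2 * i + 1 = j + 1 + 2 * i by ring, ih, pow_succ]
      ring
  rcases j with _ | j
  · have hD : D * (D - 1) ≠ 0 := by nlinarith
    have : D * (D - 1) * (I 0 - 1) = 0 := by rw [← h2, hvanish 1]
    simpa [sub_eq_zero] using (mul_eq_zero.mp this).resolve_left hD
  · simp [hvanish j]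

end TreePolynomials

section Measure

variable {d : ℕ}

/-- The test in `kmDensity` is redundant, since `√` vanishes on negative numbers. -/
theorem kmDensity_eq (d : ℕ) (l : ℝ) :
    kmDensity d l = d / (2 * π) * √(4 * ((d : ℝ) - 1) - l ^ 2) / ((d : ℝ) ^ 2 - l ^ 2) := by
  unfold kmDensity
  split_ifs with h
  · rfl
  · rw [sqrt_eq_zero'.mpr (by linarith), mul_zero, zero_div]

theorem kmDensity_nonneg (d : ℕ) (l : ℝ) : 0 ≤ kmDensity d l := by
  unfold kmDensity
  split_ifs with h
  · have : l ^ 2 < (d : ℝ) ^ 2 := by nlinarith [sq_nonneg ((d : ℝ) - 2)]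
    exact div_nonneg (by positivity) (by linarith)
  · exact le_rfl

theorem measurable_kmDensity (d : ℕ) : Measurable (kmDensity d) := by
  rw [funext (kmDensity_eq d)]
  fun_prop

theorem kmDensity_mul_sub_sq (d : ℕ) (l : ℝ) :
    kmDensity d l * ((d : ℝ) ^ 2 - l ^ 2) = d / (2 * π) * √(4 * ((d : ℝ) - 1) - l ^ 2) := by
  unfold kmDensity
  split_ifs with h
  · have : (d : ℝ) ^ 2 - l ^ 2 ≠ 0 := by nlinarith [sq_nonneg ((d : ℝ) - 2)]
    field_simp
  · rw [sqrt_eq_zero'.mpr (by linarith), mul_zero, zero_mul]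

theorem mem_Ioo_of_kmDensity_ne_zero {l : ℝ} (h : kmDensity d l ≠ 0) :
    l ∈ Set.Ioo (-(2 * √((d : ℝ) - 1))) (2 * √((d : ℝ) - 1)) := by
  unfold kmDensity at h
  split_ifs at h with hl
  · refine abs_lt.mp (abs_lt_of_sq_lt_sq ?_ (by positivity))
    rwa [mul_pow, sq_sqrt (by nlinarith), show (2 : ℝ) ^ 2 = 4 by norm_num]
  · exact absurd rfl h

theorem integral_kmMeasure (d : ℕ) (f : ℝ → ℝ) :
    ∫ l, f l ∂kmMeasure d =
      ∫ l in -(2 * √((d : ℝ) - 1))..2 * √((d : ℝ) - 1), kmDensity d l * f l := by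
  rw [kmMeasure, integral_withDensity_eq_integral_toReal_smul
    (measurable_kmDensity d).ennreal_ofReal (ae_of_all _ fun _ => ENNReal.ofReal_lt_top)]
  simp_rw [ENNReal.toReal_ofReal (kmDensity_nonneg d _), smul_eq_mul]
  rw [intervalIntegral.integral_of_le (by linarith [sqrt_nonneg ((d : ℝ) - 1)]),
    setIntegral_eq_integral_of_forall_compl_eq_zero fun l hl => ?_]
  by_contra h
  exact hl (Set.Ioo_subset_Ioc_self (mem_Ioo_of_kmDensity_ne_zero (left_ne_zero_of_mul h)))

theorem continuousOn_kmDensity (hd : 3 ≤ d) :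
    ContinuousOn (kmDensity d) (Set.Icc (-(2 * √((d : ℝ) - 1))) (2 * √((d : ℝ) - 1))) := by
  rw [funext (kmDensity_eq d)]
  refine ContinuousOn.div (by fun_prop) (by fun_prop) fun l hl => ?_
  have hd' : (3 : ℝ) ≤ d := by exact_mod_cast hd
  have := sq_le_sq' hl.1 hl.2
  rw [mul_pow, sq_sqrt (by linarith)] at this
  nlinarith

theorem integrable_kmMeasure (hd : 3 ≤ d) {g : ℝ → ℝ} (hg : Continuous g) :
    MeasureTheory.Integrable g (kmMeasure d) := by
  rw [kmMeasure, integrable_withDensity_iff (measurable_kmDensity d).ennreal_ofReal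
    (ae_of_all _ fun _ => ENNReal.ofReal_lt_top)]
  simp_rw [ENNReal.toReal_ofReal (kmDensity_nonneg d _)]
  refine (integrableOn_iff_integrable_of_support_subset fun l hl => ?_).mp
    ((hg.continuousOn.mul (continuousOn_kmDensity hd)).integrableOn_Icc)
  exact Set.Ioo_subset_Icc_self (mem_Ioo_of_kmDensity_ne_zero (right_ne_zero_of_mul hl))

theorem kmDensity_le (hd : 3 ≤ d) (l : ℝ) :
    kmDensity d l ≤ d * √((d : ℝ) - 1) / (π * ((d : ℝ) - 2) ^ 2) := by
  have hd' : (3 : ℝ) ≤ d := by exact_mod_cast hd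
  unfold kmDensity
  split_ifs with hl
  · rw [show (d : ℝ) * √((d : ℝ) - 1) / (π * ((d : ℝ) - 2) ^ 2) =
      d / (2 * π) * √(4 * ((d : ℝ) - 1)) / (((d : ℝ) - 2) ^ 2) by
        rw [show 4 * ((d : ℝ) - 1) = 2 ^ 2 * (d - 1) by ring, sqrt_mul (by norm_num),
          sqrt_sq (by norm_num)]
        field_simp]
    gcongr <;> nlinarith
  · positivity

theorem integral_sub_sq_mul_eval_jacobiPoly_treeJacobi (hd : 3 ≤ d) (j : ℕ) :
    ∫ l, ((d : ℝ) ^ 2 - l ^ 2) * (jacobiPoly (treeJacobi (d : ℝ)) j).eval l ∂kmMeasure d =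
      if j = 0 then d * ((d : ℝ) - 1) else if j = 2 then -(d * ((d : ℝ) - 1)) else 0 := by
  have hd' : (3 : ℝ) ≤ d := by exact_mod_cast hd
  set s := √((d : ℝ) - 1)
  have hsD : s ^ 2 = d - 1 := sq_sqrt (by linarith)
  have hs : 0 < s := sqrt_pos.mpr (by linarith)
  have hpt : ∀ l, kmDensity d l *
      (((d : ℝ) ^ 2 - l ^ 2) * (jacobiPoly (treeJacobi (d : ℝ)) j).eval l) =
        d / (2 * π) * ((jacobiPoly (treeJacobi (d : ℝ)) j).eval l * √(4 * s ^ 2 - l ^ 2)) := by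
    intro l
    rw [← mul_assoc, kmDensity_mul_sub_sq, hsD]
    ring
  rw [integral_kmMeasure]
  simp_rw [hpt]
  rw [intervalIntegral.integral_const_mul, integral_eval_jacobiPoly_treeJacobi_mul_sqrt hs hsD,
    hsD]
  have := pi_pos.ne'
  split_ifs
  · field_simp
  · field_simp
  · simp

theorem exists_abs_integral_eval_jacobiPoly_treeJacobi_le (hd : 3 ≤ d) :
    ∃ K, ∀ j, |∫ l, (jacobiPoly (treeJacobi (d : ℝ)) j).eval l ∂kmMeasure d| ≤
      K * (j + 1) * √((d : ℝ) - 1) ^ j := by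
  have hd' : (3 : ℝ) ≤ d := by exact_mod_cast hd
  set s := √((d : ℝ) - 1) with hs_def
  have hsD : s ^ 2 = d - 1 := sq_sqrt (by linarith)
  have hs : 1 ≤ s := by rw [hs_def, one_le_sqrt]; linarith
  set C := d * s / (π * ((d : ℝ) - 2) ^ 2)
  refine ⟨C * 2 * (4 * s), fun j => ?_⟩
  rw [integral_kmMeasure]
  have hbound : ∀ l ∈ Set.uIoc (-(2 * s)) (2 * s),
      ‖kmDensity d l * (jacobiPoly (treeJacobi (d : ℝ)) j).eval l‖ ≤ C * (2 * (j + 1) * s ^ j) := by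
    intro l hl
    rw [Set.uIoc_of_le (by linarith)] at hl
    rw [norm_mul, Real.norm_of_nonneg (kmDensity_nonneg d l)]
    exact mul_le_mul (kmDensity_le hd l) (abs_eval_jacobiPoly_treeJacobi_le hs hsD
      (abs_le.mpr ⟨hl.1.le, hl.2⟩) j) (abs_nonneg _) (by positivity)
  have := intervalIntegral.norm_integral_le_of_norm_le_const hbound
  rw [Real.norm_eq_abs, show 2 * s - -(2 * s) = 4 * s by ring,
    abs_of_pos (show 0 < 4 * s by positivity)] at this
  linarith

theorem integral_eval_jacobiPoly_treeJacobi (hd : 3 ≤ d) (j : ℕ) :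
    ∫ l, (jacobiPoly (treeJacobi (d : ℝ)) j).eval l ∂kmMeasure d = if j = 0 then 1 else 0 := by
  have hd' : (3 : ℝ) ≤ d := by exact_mod_cast hd
  obtain ⟨K, hK⟩ := exists_abs_integral_eval_jacobiPoly_treeJacobi_le hd
  refine eq_ite_of_treeJacobi_recurrence (lt_sqrt zero_le_one |>.2 (by linarith))
    (sq_sqrt (by linarith)) (fun j => ?_) hK j
  rw [← integral_sub_sq_mul_eval_jacobiPoly (fun p => integrable_kmMeasure hd p.continuous) rfl,
    integral_sub_sq_mul_eval_jacobiPoly_treeJacobi hd]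

theorem integral_pow_kmMeasure (hd : 3 ≤ d) (m : ℕ) :
    ∫ l, l ^ m ∂kmMeasure d = jacobiCoeff (treeJacobi (d : ℝ)) m 0 := by
  have hpow : ∀ l : ℝ, l ^ m = ∑ j ∈ range (m + 1), jacobiCoeff (treeJacobi (d : ℝ)) m j *
      (jacobiPoly (treeJacobi (d : ℝ)) j).eval l := fun l => by
    simpa [eval_finsetSum] using
      congrArg (eval l) (X_pow_eq_sum_jacobiPoly (b := treeJacobi (d : ℝ)) rfl m)
  simp_rw [hpow]
  rw [MeasureTheory.integral_finsetSum _ fun j _ =>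
    (integrable_kmMeasure hd (jacobiPoly _ j).continuous).const_mul _]
  simp [MeasureTheory.integral_const_mul, integral_eval_jacobiPoly_treeJacobi hd]

end Measure

section Sphere

variable {V : Type*} [Fintype V]

theorem sum_adjMatrix_mulVec {G : SimpleGraph V} [DecidableRel G.Adj] {d : ℕ}
    (hreg : G.IsRegularOfDegree d) (f : V → ℝ) : ∑ y, (G.adjMatrix ℝ *ᵥ f) y = d * ∑ y, f y := by
  have h := Matrix.dotProduct_mulVec 1 (G.adjMatrix ℝ) f
  simp only [one_dotProduct] at h
  rw [h]
  simp [dotProduct, hreg _, mul_sum]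

variable [DecidableEq V]

open Classical in
def sphere (G : SimpleGraph V) (x : V) (j : ℕ) : Finset V :=
  {y | G.Reachable x y ∧ G.dist x y = j}

def sphereIndicator (G : SimpleGraph V) (x : V) (j : ℕ) : V → ℝ :=
  fun y => if y ∈ sphere G x j then 1 else 0

variable {G : SimpleGraph V} {x y w : V} {i j : ℕ}

theorem mem_sphere : y ∈ sphere G x j ↔ G.Reachable x y ∧ G.dist x y = j := by
  simp [sphere]

theorem eq_of_mem_sphere_of_mem_sphere (hi : y ∈ sphere G x i) (hj : y ∈ sphere G x j) : i = j :=
  (mem_sphere.1 hi).2.symm.trans (mem_sphere.1 hj).2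

theorem disjoint_sphere (h : i ≠ j) : Disjoint (sphere G x i) (sphere G x j) :=
  Finset.disjoint_left.2 fun _ hi hj => h (eq_of_mem_sphere_of_mem_sphere hi hj)

theorem sphere_zero : sphere G x 0 = {x} := by
  ext y
  simp only [mem_sphere, mem_singleton]
  exact ⟨fun ⟨hr, hd⟩ => (hr.dist_eq_zero_iff.1 hd).symm, fun h => h ▸ ⟨.refl _, by simp⟩⟩

theorem exists_adj_mem_sphere (hy : y ∈ sphere G x (j + 1)) :
    ∃ u ∈ sphere G x j, G.Adj y u := by
  obtain ⟨hr, hd⟩ := mem_sphere.1 hy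
  obtain ⟨p, hp⟩ := hr.exists_walk_length_eq_dist
  cases hq : p.reverse with
  | nil => simp at hd
  | cons h q =>
    have hlen : q.length = j := by
      have := congrArg Walk.length hq
      rw [Walk.length_reverse, Walk.length_cons, hp, hd] at this
      omega
    have hru : G.Reachable x _ := ⟨q.reverse⟩
    refine ⟨_, mem_sphere.2 ⟨hru, le_antisymm ?_ ?_⟩, h⟩
    · simpa [hlen] using dist_le q.reverse
    · have := hru.dist_triangle_left y
      rw [dist_eq_one_iff_adj.2 h.symm, hd] at this
      omega

theorem exists_mem_sphere_of_adj (hy : y ∈ sphere G x j) (h : G.Adj y w) :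
    ∃ i, w ∈ sphere G x i ∧ i ≤ j + 1 ∧ j ≤ i + 1 := by
  obtain ⟨hr, hd⟩ := mem_sphere.1 hy
  have hrw : G.Reachable x w := hr.trans h.reachable
  refine ⟨G.dist x w, mem_sphere.2 ⟨hrw, rfl⟩, ?_, ?_⟩
  · have := hr.dist_triangle_left w
    rwa [dist_eq_one_iff_adj.2 h, hd] at this
  · have := hrw.dist_triangle_left y
    rwa [dist_eq_one_iff_adj.2 h.symm, hd] at this

theorem sum_sphereIndicator (G : SimpleGraph V) (x : V) (j : ℕ) :
    ∑ y, sphereIndicator G x j y = (sphere G x j).card := by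
  simp [sphereIndicator]

theorem sphereIndicator_dotProduct (G : SimpleGraph V) (x : V) (i j : ℕ) :
    sphereIndicator G x i ⬝ᵥ sphereIndicator G x j =
      if i = j then ((sphere G x i).card : ℝ) else 0 := by
  split_ifs with h
  · subst h
    simp [dotProduct, sphereIndicator]
  · refine sum_eq_zero fun y _ => ?_
    simp only [sphereIndicator, mul_ite, mul_one, mul_zero]
    split_ifs with hj hi <;> first | rfl | exact absurd (eq_of_mem_sphere_of_mem_sphere hi hj) h

theorem sum_smul_sphereIndicator_dotProduct (G : SimpleGraph V) (x : V) (α β : ℕ → ℝ) (N : ℕ) :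
    (∑ i ∈ range N, α i • sphereIndicator G x i) ⬝ᵥ
        (∑ j ∈ range N, β j • sphereIndicator G x j) =
      ∑ i ∈ range N, α i * β i * (sphere G x i).card := by
  simp only [sum_dotProduct, dotProduct_sum, smul_dotProduct, dotProduct_smul,
    sphereIndicator_dotProduct, smul_eq_mul, mul_ite, mul_zero]
  refine sum_congr rfl fun i hi => ?_
  rw [sum_ite_eq', if_pos hi]
  ring

end Sphere

section Ball

variable {n k : ℕ} {G : SimpleGraph (Fin n)} {x y u v : Fin n} {j : ℕ}

theorem ballGraph_adj_of_mem_sphere (hu : u ∈ sphere G x j) (hj : j < k) (h : G.Adj u v) :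
    (ballGraph G x k).Adj u v :=
  ⟨h, Or.inl ⟨(mem_sphere.1 hu).1, (mem_sphere.1 hu).2 ▸ hj⟩⟩

theorem reachable_deleteEdges_ballGraph {e : Sym2 (Fin n)} (hj : j ≤ k)
    (he : ∀ i < j, ∀ a ∈ sphere G x (i + 1), ∀ b ∈ sphere G x i, s(a, b) ≠ e) :
    ∀ i ≤ j, ∀ w ∈ sphere G x i, ((ballGraph G x k).deleteEdges {e}).Reachable x w
  | 0, _, w, hw => by
    rw [sphere_zero, mem_singleton] at hw
    exact hw ▸ .refl _
  | i + 1, hi, w, hw => by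
    obtain ⟨u, hu, hwu⟩ := exists_adj_mem_sphere hw
    refine (reachable_deleteEdges_ballGraph hj he i (by omega) u hu).trans (Adj.reachable ?_)
    rw [deleteEdges_adj, Set.mem_singleton_iff, Sym2.eq_swap]
    exact ⟨ballGraph_adj_of_mem_sphere hu (by omega) hwu.symm, he i (by omega) w hw u hu⟩

theorem not_adj_of_mem_sphere (hacyclic : (ballGraph G x k).IsAcyclic) (hj : j < k)
    (hu : u ∈ sphere G x j) (hv : v ∈ sphere G x j) : ¬G.Adj u v := by
  intro huv
  apply isBridge_iff.1 (isAcyclic_iff_forall_adj_isBridge.1 hacyclic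
    (ballGraph_adj_of_mem_sphere hu hj huv))
  have he : ∀ i < j, ∀ a ∈ sphere G x (i + 1), ∀ b ∈ sphere G x i, s(a, b) ≠ s(u, v) := by
    intro i _ a ha b hb h
    rcases Sym2.eq_iff.1 h with ⟨rfl, rfl⟩ | ⟨rfl, rfl⟩
    · have := eq_of_mem_sphere_of_mem_sphere ha hu
      have := eq_of_mem_sphere_of_mem_sphere hb hv
      omega
    · have := eq_of_mem_sphere_of_mem_sphere ha hv
      have := eq_of_mem_sphere_of_mem_sphere hb hu
      omega
  exact (reachable_deleteEdges_ballGraph hj.le he j le_rfl u hu).symm.trans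
    (reachable_deleteEdges_ballGraph hj.le he j le_rfl v hv)

theorem eq_of_adj_of_mem_sphere (hacyclic : (ballGraph G x k).IsAcyclic) (hj : j < k)
    (hy : y ∈ sphere G x (j + 1)) (hu : u ∈ sphere G x j) (hv : v ∈ sphere G x j)
    (hyu : G.Adj y u) (hyv : G.Adj y v) : u = v := by
  by_contra hne
  apply isBridge_iff.1 (isAcyclic_iff_forall_adj_isBridge.1 hacyclic
    (ballGraph_adj_of_mem_sphere hu hj hyu.symm))
  have he : ∀ i < j, ∀ a ∈ sphere G x (i + 1), ∀ b ∈ sphere G x i, s(a, b) ≠ s(u, y) := by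
    intro i _ a ha b hb h
    rcases Sym2.eq_iff.1 h with ⟨-, rfl⟩ | ⟨rfl, -⟩
    · have := eq_of_mem_sphere_of_mem_sphere hb hy
      omega
    · have := eq_of_mem_sphere_of_mem_sphere ha hy
      omega
  have hvy : ((ballGraph G x k).deleteEdges {s(u, y)}).Adj v y := by
    rw [deleteEdges_adj, Set.mem_singleton_iff]
    refine ⟨ballGraph_adj_of_mem_sphere hv hj hyv.symm, fun h => ?_⟩
    rcases Sym2.eq_iff.1 h with ⟨h, -⟩ | ⟨rfl, -⟩
    · exact hne h.symm
    · exact G.irrefl hyv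
  exact (reachable_deleteEdges_ballGraph hj.le he j le_rfl u hu).symm.trans
    ((reachable_deleteEdges_ballGraph hj.le he j le_rfl v hv).trans hvy.reachable)

variable [DecidableRel G.Adj] {d : ℕ}

theorem card_neighborFinset_inter_sphere_of_mem_sphere_succ
    (hacyclic : (ballGraph G x k).IsAcyclic) (hj : j < k) (hy : y ∈ sphere G x (j + 1)) :
    (G.neighborFinset y ∩ sphere G x j).card = 1 := by
  obtain ⟨u, hu, hyu⟩ := exists_adj_mem_sphere hy
  refine card_eq_one.2 ⟨u, eq_singleton_iff_unique_mem.2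
    ⟨mem_inter.2 ⟨(mem_neighborFinset _ _ _).2 hyu, hu⟩, fun v hv => ?_⟩⟩
  rw [mem_inter, mem_neighborFinset] at hv
  exact eq_of_adj_of_mem_sphere hacyclic hj hy hv.2 hu hv.1 hyu

theorem card_neighborFinset_inter_sphere_succ (hacyclic : (ballGraph G x k).IsAcyclic)
    (hreg : G.IsRegularOfDegree d) (hj : j < k) (hy : y ∈ sphere G x j) :
    ((G.neighborFinset y ∩ sphere G x (j + 1)).card : ℝ) = treeJacobi (d : ℝ) (j + 1) := by
  rcases j with _ | i
  · rw [sphere_zero, mem_singleton] at hy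
    subst hy
    rw [inter_eq_left.2 fun w hw => mem_sphere.2 ⟨((mem_neighborFinset _ _ _).1 hw).reachable,
      dist_eq_one_iff_adj.2 ((mem_neighborFinset _ _ _).1 hw)⟩, card_neighborFinset_eq_degree,
      hreg y]
    rfl
  · set N := G.neighborFinset y
    have hsub : N ⊆ sphere G x (i + 1 + 1) ∪ sphere G x i := fun w hw => by
      obtain ⟨l, hl, hl1, hl2⟩ := exists_mem_sphere_of_adj hy ((mem_neighborFinset _ _ _).1 hw)
      have : l ≠ i + 1 := fun h => not_adj_of_mem_sphere hacyclic hj hy (h ▸ hl)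
        ((mem_neighborFinset _ _ _).1 hw)
      rcases (show l = i + 1 + 1 ∨ l = i by omega) with rfl | rfl
      · exact mem_union_left _ hl
      · exact mem_union_right _ hl
    have hdisj : Disjoint (N ∩ sphere G x (i + 1 + 1)) (N ∩ sphere G x i) :=
      (disjoint_sphere (by omega)).mono inter_subset_right inter_subset_right
    have hcard := congrArg card (inter_eq_left.2 hsub)
    rw [inter_union_distrib_left, card_union_of_disjoint hdisj, card_neighborFinset_eq_degree,
      hreg y, card_neighborFinset_inter_sphere_of_mem_sphere_succ hacyclic (by omega) hy] at hcard
    rw [show treeJacobi (d : ℝ) (i + 1 + 1) = d - 1 from rfl, ← hcard]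
    push_cast
    ring

theorem neighborFinset_inter_sphere_eq_empty (hacyclic : (ballGraph G x k).IsAcyclic)
    (hj : j < k) (hy : y ∉ sphere G x (j + 1)) (hy' : ∀ i, j = i + 1 → y ∉ sphere G x i) :
    G.neighborFinset y ∩ sphere G x j = ∅ := by
  refine eq_empty_of_forall_notMem fun w hw => ?_
  rw [mem_inter, mem_neighborFinset] at hw
  obtain ⟨l, hl, hl1, hl2⟩ := exists_mem_sphere_of_adj hw.2 hw.1.symm
  rcases (show l = j + 1 ∨ l = j ∨ j = l + 1 by omega) with rfl | rfl | h
  · exact hy hl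
  · exact not_adj_of_mem_sphere hacyclic hj hl hw.2 hw.1
  · exact hy' l h hl

theorem adjMatrix_mulVec_sphereIndicator (hacyclic : (ballGraph G x k).IsAcyclic)
    (hreg : G.IsRegularOfDegree d) (hj : j < k) :
    G.adjMatrix ℝ *ᵥ sphereIndicator G x j =
      sphereIndicator G x (j + 1) + treeJacobi (d : ℝ) j • sphereIndicator G x (j - 1) := by
  funext y
  simp only [adjMatrix_mulVec_apply, sphereIndicator, sum_boole, filter_mem_eq_inter,
    Pi.add_apply, Pi.smul_apply, smul_eq_mul]
  by_cases h1 : y ∈ sphere G x (j + 1)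
  · rw [card_neighborFinset_inter_sphere_of_mem_sphere_succ hacyclic hj h1, if_pos h1,
      if_neg fun h => by have := eq_of_mem_sphere_of_mem_sphere h1 h; omega]
    simp
  rcases j with _ | i
  · rw [neighborFinset_inter_sphere_eq_empty hacyclic hj h1 (by omega)]
    simp [treeJacobi, h1]
  by_cases h2 : y ∈ sphere G x i
  · rw [card_neighborFinset_inter_sphere_succ hacyclic hreg (by omega) h2, if_neg h1,
      Nat.add_sub_cancel, if_pos h2]
    simp
  · rw [neighborFinset_inter_sphere_eq_empty hacyclic hj h1 fun i' h => by
      rwa [show i' = i by omega]]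
    simp [h1, h2]

theorem adjMatrix_pow_mulVec_sphereIndicator_zero (hacyclic : (ballGraph G x k).IsAcyclic)
    (hreg : G.IsRegularOfDegree d) {a : ℕ} (ha : a ≤ k) :
    (G.adjMatrix ℝ ^ a) *ᵥ sphereIndicator G x 0 =
      ∑ j ∈ range (a + 1), jacobiCoeff (treeJacobi (d : ℝ)) a j • sphereIndicator G x j := by
  have := pow_apply_eq_sum_jacobiCoeff rfl (Matrix.toLin' (G.adjMatrix ℝ)) (sphereIndicator G x)
    (fun j hj => by rw [Matrix.toLin'_apply, adjMatrix_mulVec_sphereIndicator hacyclic hreg hj])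
    a ha
  rwa [← Matrix.toLin'_pow, Matrix.toLin'_apply] at this

theorem card_sphere (hacyclic : (ballGraph G x k).IsAcyclic) (hreg : G.IsRegularOfDegree d) :
    ∀ j ≤ k, ((sphere G x j).card : ℝ) = jacobiWeight (treeJacobi (d : ℝ)) j := by
  have hrec : ∀ i < k, ((sphere G x (i + 1)).card : ℝ) + treeJacobi (d : ℝ) i *
      (sphere G x (i - 1)).card = d * (sphere G x i).card := fun i hi => by
    have := congrArg (fun f : Fin n → ℝ => ∑ y, f y)
      (adjMatrix_mulVec_sphereIndicator hacyclic hreg hi)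
    simp only [sum_adjMatrix_mulVec hreg, Pi.add_apply, Pi.smul_apply, smul_eq_mul,
      sum_add_distrib, ← mul_sum, sum_sphereIndicator] at this
    exact this.symm
  intro j
  induction j using Nat.strong_induction_on with
  | _ j ih =>
    intro hj
    match j with
    | 0 => simp [sphere_zero, jacobiWeight]
    | 1 => simpa [sphere_zero, treeJacobi, jacobiWeight] using hrec 0 (by omega)
    | i + 2 =>
      have h := hrec (i + 1) (by omega)
      rw [ih (i + 1) (by omega) (by omega), Nat.add_sub_cancel, ih i (by omega) (by omega)] at h
      simp only [jacobiWeight, treeJacobi] at h ⊢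
      linear_combination h

theorem adjMatrix_pow_apply_self (hacyclic : (ballGraph G x k).IsAcyclic)
    (hreg : G.IsRegularOfDegree d) {m : ℕ} (hm : m ≤ 2 * k) :
    (G.adjMatrix ℝ ^ m) x x = jacobiCoeff (treeJacobi (d : ℝ)) m 0 := by
  obtain ⟨a, c, rfl, ha, hc⟩ : ∃ a c, m = a + c ∧ a ≤ k ∧ c ≤ k :=
    ⟨m / 2, m - m / 2, by omega, by omega, by omega⟩
  have hcol : ∀ p, G.adjMatrix ℝ ^ p *ᵥ sphereIndicator G x 0 =
      fun y => (G.adjMatrix ℝ ^ p) y x := by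
    intro p
    rw [show sphereIndicator G x 0 = Pi.single x 1 from funext fun y => by
      simp [sphereIndicator, sphere_zero, Pi.single_apply], Matrix.mulVec_single_one]
    rfl
  have hdot : (G.adjMatrix ℝ ^ (a + c)) x x = (G.adjMatrix ℝ ^ a *ᵥ sphereIndicator G x 0) ⬝ᵥ
      (G.adjMatrix ℝ ^ c *ᵥ sphereIndicator G x 0) := by
    rw [hcol, hcol, pow_add, Matrix.mul_apply]
    simp only [dotProduct, ((isSymm_adjMatrix G).pow a).apply]
  rw [hdot, adjMatrix_pow_mulVec_sphereIndicator_zero hacyclic hreg ha,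
    adjMatrix_pow_mulVec_sphereIndicator_zero hacyclic hreg hc,
    ← sum_range_jacobiCoeff_smul_of_lt (N := a + c + 1) (by omega),
    ← sum_range_jacobiCoeff_smul_of_lt (N := a + c + 1) (by omega),
    sum_smul_sphereIndicator_dotProduct, ← sum_jacobiCoeff_mul_jacobiCoeff_mul_jacobiWeight]
  refine sum_congr rfl fun j _ => ?_
  by_cases hj : j ≤ a
  · rw [card_sphere hacyclic hreg j (by omega)]
  · rw [jacobiCoeff_eq_zero_of_lt _ (by omega), zero_mul, zero_mul, zero_mul]

end Ball

end KestenMcKay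

theorem stmt17 (d n : ℕ) (hd : 3 ≤ d) (G : SimpleGraph (Fin n)) [DecidableRel G.Adj]
    (hreg : G.IsRegularOfDegree d) (x : Fin n) (k : ℕ)
    (hacyclic : (ballGraph G x k).IsAcyclic) (m : ℕ) (hm : m ≤ 2 * k) :
    ((G.adjMatrix ℝ) ^ m) x x = ∫ l : ℝ, l ^ m ∂(kmMeasure d) := by
  rw [KestenMcKay.integral_pow_kmMeasure hd, KestenMcKay.adjMatrix_pow_apply_self hacyclic hreg hm]

end
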